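/- arXiv:2305.17203 — 3 statements merged into one kernel-verified Lean document; each statement's English description precedes it below -/
import Mathlib

section
/- Let v : ℝ → ℝⁿ be a function of bounded variation that is right-continuous, and let x ∈ ℝ. Suppose that for every ε > 0 there exist u₀ ∈ ℝⁿ and r₀ > 0 such that (1/r)∫_{x−r}^{x+r} |v(y) − u₀| dy ≤ ε for all 0 < r ≤ r₀. Then v is continuous at x, i.e. the left and right limits of v at x coincide and equal v(x). -/
open MeasureTheory Set Filter Topology

/-! A BV function has a left limit `L` at `x`, and by right-continuity its right limit is `v x`.
By the fundamental theorem of calculus the averages `(1/r) ∫_{x-r}^{x+r} ‖v - u‖` tend to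
`‖L - u‖ + ‖v x - u‖ ≥ ‖L - v x‖` as `r → 0⁺`, so the hypothesis forces `L = v x`. -/

theorem LocallyBoundedVariationOn.measurable {ι : Type*} [Fintype ι]
    {f : ℝ → EuclideanSpace ℝ ι} (hf : LocallyBoundedVariationOn f univ) : Measurable f := by
  refine (WithLp.measurable_toLp 2 _).comp (measurable_pi_iff.2 fun i => ?_)
  obtain ⟨p, q, hp, hq, hpq⟩ :=
    ((EuclideanSpace.proj (𝕜 := ℝ) i).lipschitz.comp_locallyBoundedVariationOn
      hf).exists_monotoneOn_sub_monotoneOn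
  change Measurable (EuclideanSpace.proj (𝕜 := ℝ) i ∘ f)
  rw [hpq]
  exact (monotoneOn_univ.1 hp).measurable.sub (monotoneOn_univ.1 hq).measurable

theorem BoundedVariationOn.locallyIntegrable {ι : Type*} [Fintype ι]
    {f : ℝ → EuclideanSpace ℝ ι} (hf : BoundedVariationOn f univ) : LocallyIntegrable f := by
  refine (locallyIntegrable_const (‖f 0‖ + (eVariationOn f univ).toReal)).mono
    hf.locallyBoundedVariationOn.measurable.aestronglyMeasurable (ae_of_all _ fun t => ?_)
  calc ‖f t‖ ≤ ‖f 0‖ + ‖f t - f 0‖ := norm_le_norm_add_norm_sub' _ _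
    _ ≤ ‖f 0‖ + (eVariationOn f univ).toReal := by
        rw [← dist_eq_norm]; gcongr; exact hf.dist_le (mem_univ t) (mem_univ 0)
    _ ≤ _ := le_abs_self _

theorem nhdsLE_inf_ae_le_nhdsLT {α : Type*} [TopologicalSpace α] [LinearOrder α]
    [MeasurableSpace α] (μ : Measure α) [NullSingletonClass μ] (x : α) :
    𝓝[≤] x ⊓ ae μ ≤ 𝓝[<] x :=
  calc 𝓝[≤] x ⊓ ae μ ≤ 𝓝[≤] x ⊓ 𝓟 {x}ᶜ :=
        inf_le_inf_left _ (le_principal_iff.2 (compl_mem_ae_iff.2 (measure_singleton x)))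
    _ = 𝓝[<] x := by rw [nhdsWithin, inf_assoc, inf_principal, ← Iic_sdiff_right]; rfl

theorem tendsto_inv_smul_intervalIntegral_sub_add {F : Type*} [NormedAddCommGroup F]
    [NormedSpace ℝ F] [CompleteSpace F] {g : ℝ → F} {x : ℝ} {a b : F}
    (hg : LocallyIntegrable g) (ha : Tendsto g (𝓝[<] x) (𝓝 a))
    (hb : Tendsto g (𝓝[>] x) (𝓝 b)) :
    Tendsto (fun r => r⁻¹ • ∫ y in x - r..x + r, g y) (𝓝[>] 0) (𝓝 (a + b)) := by
  have hgi : ∀ c d, IntervalIntegrable g volume c d := fun c d =>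
    (hg.integrableOn_isCompact isCompact_uIcc).intervalIntegrable
  set G : ℝ → F := fun t => ∫ y in x..t, g y
  have hG_right : HasDerivWithinAt G b (Ici x) x :=
    intervalIntegral.integral_hasDerivWithinAt_of_tendsto_ae_right (hgi x x)
      hg.aestronglyMeasurable.stronglyMeasurableAtFilter (hb.mono_left inf_le_left)
  -- The left-sided FTC filter is `𝓝[≤] x`; the point `x` itself is negligible.
  have hG_left : HasDerivWithinAt G a (Iic x) x :=
    intervalIntegral.integral_hasDerivWithinAt_of_tendsto_ae_right (hgi x x)
      hg.aestronglyMeasurable.stronglyMeasurableAtFilter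
      (ha.mono_left (nhdsLE_inf_ae_le_nhdsLT volume x))
  have h₁ : HasDerivWithinAt (fun r => G (x + r)) b (Ici 0) 0 := by
    have hmap : MapsTo (fun r : ℝ => x + r) (Ici 0) (Ici x) := fun _ hr =>
      mem_Ici.2 (le_add_of_nonneg_right hr)
    have := hG_right.scomp_of_eq 0 ((hasDerivAt_id (0 : ℝ)).const_add x).hasDerivWithinAt hmap
      (add_zero x).symm
    rwa [one_smul] at this
  have h₂ : HasDerivWithinAt (fun r => G (x - r)) (-a) (Ici 0) 0 := by
    have hmap : MapsTo (fun r : ℝ => x - r) (Ici 0) (Iic x) := fun _ hr =>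
      mem_Iic.2 (sub_le_self x hr)
    have := hG_left.scomp_of_eq 0 ((hasDerivAt_id (0 : ℝ)).const_sub x).hasDerivWithinAt hmap
      (sub_zero x).symm
    rwa [neg_one_smul] at this
  have hslope := hasDerivWithinAt_iff_tendsto_slope.1 (h₁.sub h₂)
  rw [Ici_sdiff_left, sub_neg_eq_add, add_comm] at hslope
  refine hslope.congr' (eventually_nhdsWithin_of_forall fun r _ => ?_)
  simp [slope, G, intervalIntegral.integral_interval_sub_left (hgi _ _) (hgi _ _)]

theorem eq_of_forall_average_norm_sub_le {E : Type*} [NormedAddCommGroup E] {f : ℝ → E}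
    {x : ℝ} {L R : E} (hf : LocallyIntegrable f) (hL : Tendsto f (𝓝[<] x) (𝓝 L))
    (hR : Tendsto f (𝓝[>] x) (𝓝 R))
    (h : ∀ ε > (0:ℝ), ∃ (u : E) (r₀ : ℝ), 0 < r₀ ∧
      ∀ r, 0 < r → r ≤ r₀ → (1/r) * ∫ y in x - r..x + r, ‖f y - u‖ ≤ ε) :
    L = R := by
  refine eq_of_forall_dist_le fun ε hε => ?_
  obtain ⟨u, r₀, hr₀, hu⟩ := h ε hε
  have hint : LocallyIntegrable (fun y => ‖f y - u‖) :=
    locallyIntegrableOn_univ.1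
      (locallyIntegrableOn_univ.2 (hf.sub (locallyIntegrable_const u))).norm
  have hlim := tendsto_inv_smul_intervalIntegral_sub_add hint (hL.sub_const u).norm
    (hR.sub_const u).norm
  have hle : ‖L - u‖ + ‖R - u‖ ≤ ε := by
    refine le_of_tendsto hlim (eventually_of_mem (Ioc_mem_nhdsGT hr₀) fun r hr => ?_)
    simpa only [smul_eq_mul, one_div] using hu r hr.1 hr.2
  calc dist L R ≤ dist L u + dist R u := dist_triangle_right _ _ _
    _ ≤ ε := by rwa [dist_eq_norm, dist_eq_norm]

/-- A right-continuous BV function which is approximately continuous (in the averaged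
L¹ sense) at a point is continuous there. -/
theorem stmt3 (n : ℕ) (v : ℝ → EuclideanSpace ℝ (Fin n))
    (hBV : eVariationOn v univ ≠ ⊤)
    (hrc : ∀ z : ℝ, Tendsto v (𝓝[>] z) (𝓝 (v z))) (x : ℝ)
    (h : ∀ ε > (0:ℝ), ∃ (u₀ : EuclideanSpace ℝ (Fin n)) (r₀ : ℝ), 0 < r₀ ∧
      ∀ r, 0 < r → r ≤ r₀ → (1/r) * ∫ y in x - r..x + r, ‖v y - u₀‖ ≤ ε) :
    ContinuousAt v x := by
  have hleft := BoundedVariationOn.tendsto_leftLim hBV x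
  have hjump : Function.leftLim v x = v x :=
    eq_of_forall_average_norm_sub_le (BoundedVariationOn.locallyIntegrable hBV) hleft (hrc x) h
  rw [hjump] at hleft
  exact continuousAt_iff_continuous_left'_right'.2 ⟨hleft, hrc x⟩
end

section
/- Let u be a weak solution of u_t + f(u)_x = 0 on (0,T) × ℝ with u ∈ L^∞, i.e. ∫∫ (u φ_t + f(u) φ_x) dx dt = 0 for all φ ∈ C¹_c((0,T) × ℝ). Suppose (τ,ξ) ∈ (0,T) × ℝ is a point of approximate jump: there exist u⁻, u⁺ ∈ ℝⁿ and λ ∈ ℝ such that, with U(t,x) = u⁻ for x < λt and U(t,x) = u⁺ for x > λt, one has lim_{r↓0} r^{−2} ∫_{−r}^{r}∫_{−r}^{r} |u(τ+t, ξ+x) − U(t,x)| dx dt = 0. Then the Rankine–Hugoniot condition holds: f(u⁺) − f(u⁻) = λ(u⁺ − u⁻). -/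
/-!
Test the weak formulation at scale `r` against
`φ_r(t, x) = r g((t - τ)/r) g((x - ξ - λ(t - τ))/r)`, where `g` is a bump with `g 0 = 1`.
For the jump profile `U` this gives exactly `r² (∫ g) ((f u⁻ - λ u⁻) - (f u⁺ - λ u⁺))`:
integrating along the lines `x - λt = const`, only the jump of `U` across `x = λt` survives.
For the solution `u` it gives `0`. The gradient of `φ_r` is bounded uniformly in `r` and
supported in the box of side `2r`, and `‖f a - f b‖ ≤ ε + C_ε ‖a - b‖` on bounded sets. So the
two values differ by at most `C_ε ∬_box |u - U| + O(ε r²) = o(r²) + O(ε r²)`. Divide by `r²`,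
let `r → 0`, then `ε → 0`.
-/

open MeasureTheory Set Filter Topology
open scoped ENNReal

noncomputable section

section PartialDerivatives

-- Points of `ℝ × ℝ` are `(t, x)`, so `partialFst φ = φₜ` and `partialSnd φ = φₓ`.
def partialFst (φ : ℝ × ℝ → ℝ) (p : ℝ × ℝ) : ℝ := deriv (fun s => φ (s, p.2)) p.1

def partialSnd (φ : ℝ × ℝ → ℝ) (p : ℝ × ℝ) : ℝ := deriv (fun y => φ (p.1, y)) p.2

variable {φ : ℝ × ℝ → ℝ}

lemma partialFst_eq_fderiv (hφ : Differentiable ℝ φ) (p : ℝ × ℝ) :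
    partialFst φ p = fderiv ℝ φ p (1, 0) :=
  ((hφ p).hasFDerivAt.comp_hasDerivAt p.1
    ((hasDerivAt_id p.1).prodMk (hasDerivAt_const p.1 p.2))).deriv

lemma partialSnd_eq_fderiv (hφ : Differentiable ℝ φ) (p : ℝ × ℝ) :
    partialSnd φ p = fderiv ℝ φ p (0, 1) :=
  ((hφ p).hasFDerivAt.comp_hasDerivAt p.2
    ((hasDerivAt_const p.2 p.1).prodMk (hasDerivAt_id p.2))).deriv

lemma ContDiff.continuous_partialFst (hφ : ContDiff ℝ 1 φ) : Continuous (partialFst φ) := by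
  rw [funext (partialFst_eq_fderiv (hφ.differentiable one_ne_zero))]
  exact (hφ.continuous_fderiv one_ne_zero).clm_apply continuous_const

lemma ContDiff.continuous_partialSnd (hφ : ContDiff ℝ 1 φ) : Continuous (partialSnd φ) := by
  rw [funext (partialSnd_eq_fderiv (hφ.differentiable one_ne_zero))]
  exact (hφ.continuous_fderiv one_ne_zero).clm_apply continuous_const

lemma partialFst_eq_zero_of_notMem_tsupport {p : ℝ × ℝ} (hp : p ∉ tsupport φ) :
    partialFst φ p = 0 := by
  have h : (fun s => φ (s, p.2)) =ᶠ[𝓝 p.1] fun _ => 0 :=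
    (continuous_id.prodMk continuous_const).continuousAt.eventually
      (notMem_tsupport_iff_eventuallyEq.1 hp)
  exact h.deriv_eq.trans (deriv_const _ _)

lemma partialSnd_eq_zero_of_notMem_tsupport {p : ℝ × ℝ} (hp : p ∉ tsupport φ) :
    partialSnd φ p = 0 := by
  have h : (fun y => φ (p.1, y)) =ᶠ[𝓝 p.2] fun _ => 0 :=
    (continuous_const.prodMk continuous_id).continuousAt.eventually
      (notMem_tsupport_iff_eventuallyEq.1 hp)
  exact h.deriv_eq.trans (deriv_const _ _)

lemma HasCompactSupport.partialFst (hφ : HasCompactSupport φ) :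
    HasCompactSupport (partialFst φ) :=
  hφ.mono' fun _ hp => by_contra fun h => hp (partialFst_eq_zero_of_notMem_tsupport h)

lemma HasCompactSupport.partialSnd (hφ : HasCompactSupport φ) :
    HasCompactSupport (partialSnd φ) :=
  hφ.mono' fun _ hp => by_contra fun h => hp (partialSnd_eq_zero_of_notMem_tsupport h)

lemma partialFst_comp_sub (q p : ℝ × ℝ) :
    partialFst (fun p => φ (p - q)) p = partialFst φ (p - q) :=
  deriv_comp_sub_const (fun s => φ (s, p.2 - q.2)) q.1 p.1

lemma partialSnd_comp_sub (q p : ℝ × ℝ) :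
    partialSnd (fun p => φ (p - q)) p = partialSnd φ (p - q) :=
  deriv_comp_sub_const (fun y => φ (p.1 - q.1, y)) q.2 p.2

lemma partialFst_mul_comp_sub {α β : ℝ → ℝ} (hα : Differentiable ℝ α) (hβ : Differentiable ℝ β)
    (l : ℝ) (p : ℝ × ℝ) :
    partialFst (fun p => α p.1 * β (p.2 - l * p.1)) p =
      deriv α p.1 * β (p.2 - l * p.1) - l * (α p.1 * deriv β (p.2 - l * p.1)) := by
  have hy : HasDerivAt (fun s => p.2 - l * s) (-l) p.1 := by
    simpa using ((hasDerivAt_id p.1).const_mul l).const_sub p.2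
  have := (hα p.1).hasDerivAt.mul ((hβ _).hasDerivAt.comp p.1 hy)
  rw [partialFst, show (fun s => α (s, p.2).1 * β ((s, p.2).2 - l * (s, p.2).1)) =
    α * β ∘ fun s => p.2 - l * s from rfl, this.deriv]
  simp only [Function.comp_apply]
  ring

lemma partialSnd_mul_comp_sub {α β : ℝ → ℝ} (hβ : Differentiable ℝ β) (l : ℝ) (p : ℝ × ℝ) :
    partialSnd (fun p => α p.1 * β (p.2 - l * p.1)) p = α p.1 * deriv β (p.2 - l * p.1) := by
  have hy : HasDerivAt (fun y => y - l * p.1) 1 p.2 := (hasDerivAt_id p.2).sub_const _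
  have := ((hβ _).hasDerivAt.comp p.2 hy).const_mul (α p.1)
  rw [mul_one] at this
  exact this.deriv

end PartialDerivatives

section TestFunctions

def rescale (r : ℝ) (φ : ℝ × ℝ → ℝ) (p : ℝ × ℝ) : ℝ := r * φ (r⁻¹ • p)

variable {φ : ℝ × ℝ → ℝ} {r : ℝ}

lemma partialFst_rescale (hr : r ≠ 0) (p : ℝ × ℝ) :
    partialFst (rescale r φ) p = partialFst φ (r⁻¹ • p) := by
  simp only [partialFst, rescale, Prod.smul_mk, smul_eq_mul, deriv_const_mul_field',
    deriv_comp_mul_left r⁻¹ (fun s => φ (s, r⁻¹ * p.2)), Prod.smul_fst, Prod.smul_snd]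
  field_simp

lemma partialSnd_rescale (hr : r ≠ 0) (p : ℝ × ℝ) :
    partialSnd (rescale r φ) p = partialSnd φ (r⁻¹ • p) := by
  simp only [partialSnd, rescale, Prod.smul_mk, smul_eq_mul, deriv_const_mul_field',
    deriv_comp_mul_left r⁻¹ (fun y => φ (r⁻¹ * p.1, y)), Prod.smul_fst, Prod.smul_snd]
  field_simp

lemma ContDiff.rescale (hφ : ContDiff ℝ 1 φ) : ContDiff ℝ 1 (rescale r φ) :=
  contDiff_const.mul (hφ.comp (contDiff_const_smul _))

lemma HasCompactSupport.rescale (hφ : HasCompactSupport φ) (hr : r ≠ 0) :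
    HasCompactSupport (rescale r φ) :=
  (hφ.comp_smul (inv_ne_zero hr)).mul_left

lemma tsupport_rescale_subset_ball (hφ : tsupport φ ⊆ Metric.ball 0 1) (hr : 0 < r) :
    tsupport (rescale r φ) ⊆ Metric.ball 0 r := by
  refine (closure_minimal (fun p hp => ?_)
    ((isClosed_tsupport φ).preimage (continuous_const_smul r⁻¹))).trans fun p hp => ?_
  · exact subset_tsupport _ (right_ne_zero_of_mul hp)
  · have := hφ hp
    rw [mem_ball_zero_iff, norm_smul, norm_inv, Real.norm_of_nonneg hr.le, inv_mul_lt_iff₀ hr,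
      mul_one] at this
    exact mem_ball_zero_iff.2 this

lemma rescale_mul_comp_sub (α β : ℝ → ℝ) (l r : ℝ) :
    rescale r (fun p => α p.1 * β (p.2 - l * p.1)) =
      fun p => (r * α (r⁻¹ * p.1)) * β (r⁻¹ * (p.2 - l * p.1)) := by
  ext p
  simp only [rescale, Prod.smul_fst, Prod.smul_snd, smul_eq_mul]
  ring_nf

lemma hasCompactSupport_mul_comp_sub {α β : ℝ → ℝ} (hα : HasCompactSupport α)
    (hβ : HasCompactSupport β) (l : ℝ) :
    HasCompactSupport fun p : ℝ × ℝ => α p.1 * β (p.2 - l * p.1) := by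
  refine HasCompactSupport.intro ((hα.prod hβ).image (f := fun q : ℝ × ℝ => (q.1, q.2 + l * q.1))
    (by fun_prop)) fun p hp => by_contra fun h => hp ?_
  obtain ⟨h₁, h₂⟩ := mul_ne_zero_iff.1 h
  exact ⟨(p.1, p.2 - l * p.1), ⟨subset_tsupport _ h₁, subset_tsupport _ h₂⟩, by simp⟩

lemma tsupport_mul_comp_sub_subset_ball {α β : ℝ → ℝ} {a b : ℝ}
    (hα : tsupport α ⊆ Metric.closedBall 0 a) (hβ : tsupport β ⊆ Metric.closedBall 0 b) (l : ℝ)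
    (ha : a < 1) (hb : b + |l| * a < 1) :
    tsupport (fun p : ℝ × ℝ => α p.1 * β (p.2 - l * p.1)) ⊆ Metric.ball 0 1 := by
  have hK : IsClosed ({p : ℝ × ℝ | |p.1| ≤ a} ∩ {p | |p.2 - l * p.1| ≤ b}) :=
    (isClosed_le (by fun_prop) continuous_const).inter (isClosed_le (by fun_prop) continuous_const)
  refine (closure_minimal (fun p hp => ?_) hK).trans
    fun p ⟨(h₁ : |p.1| ≤ a), (h₂ : |p.2 - l * p.1| ≤ b)⟩ => ?_
  · obtain ⟨hp₁, hp₂⟩ := mul_ne_zero_iff.1 hp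
    simpa [Real.norm_eq_abs] using
      And.intro (hα (subset_tsupport _ hp₁)) (hβ (subset_tsupport _ hp₂))
  · have : |p.2| ≤ |p.2 - l * p.1| + |l| * |p.1| := by
      simpa [abs_mul] using abs_sub_le p.2 (l * p.1) 0
    simp only [Metric.mem_ball, dist_zero_right, Prod.norm_def, Real.norm_eq_abs, max_lt_iff]
    constructor <;> nlinarith [abs_nonneg l]

lemma exists_bump_tsupport_mul_comp_sub_subset_ball (l : ℝ) :
    ∃ g : ℝ → ℝ, ContDiff ℝ 1 g ∧ HasCompactSupport g ∧ g 0 = 1 ∧ 0 < ∫ t, g t ∧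
      tsupport (fun p : ℝ × ℝ => g p.1 * g (p.2 - l * p.1)) ⊆ Metric.ball 0 1 := by
  set δ := (2 + |l|)⁻¹
  have hδ : 0 < δ := by positivity
  have hδl : δ + |l| * δ < 1 := by
    rw [← one_add_mul, mul_inv_lt_iff₀ (by positivity)]
    linarith
  let g : ContDiffBump (0 : ℝ) := ⟨δ / 2, δ, half_pos hδ, half_lt_self hδ⟩
  exact ⟨g, g.contDiff, g.hasCompactSupport,
    g.one_of_mem_closedBall (Metric.mem_closedBall_self g.rIn_pos.le), g.integral_pos,
    tsupport_mul_comp_sub_subset_ball g.tsupport_eq.le g.tsupport_eq.le l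
      (by nlinarith [abs_nonneg l]) hδl⟩

end TestFunctions

section Deriv

variable {β : ℝ → ℝ}

lemma integrable_deriv_of_hasCompactSupport (hβ : ContDiff ℝ 1 β) (hβc : HasCompactSupport β) :
    Integrable (deriv β) :=
  (hβ.continuous_deriv le_rfl).integrable_of_hasCompactSupport hβc.deriv

lemma integral_deriv_of_hasCompactSupport (hβ : ContDiff ℝ 1 β) (hβc : HasCompactSupport β) :
    ∫ x, deriv β x = 0 := by
  have h := integral_of_hasDerivAt_of_tendsto
    (fun x => (hβ.differentiable one_ne_zero x).hasDerivAt)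
    (integrable_deriv_of_hasCompactSupport hβ hβc)
    (hβc.is_zero_at_infty.mono_left atBot_le_cocompact)
    (hβc.is_zero_at_infty.mono_left atTop_le_cocompact)
  rwa [sub_zero] at h

lemma integral_Iio_deriv_of_hasCompactSupport (hβ : ContDiff ℝ 1 β) (hβc : HasCompactSupport β)
    (a : ℝ) : ∫ x in Iio a, deriv β x = β a := by
  have h := integral_Iic_of_hasDerivAt_of_tendsto' (a := a)
    (fun x _ => (hβ.differentiable one_ne_zero x).hasDerivAt)
    (integrable_deriv_of_hasCompactSupport hβ hβc).integrableOn
    (hβc.is_zero_at_infty.mono_left atBot_le_cocompact)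
  rwa [sub_zero, ← setIntegral_congr_set Iio_ae_eq_Iic] at h

end Deriv

lemma nonpos_of_forall_eventually_sq_mul_le {x K : ℝ} {J : ℝ → ℝ}
    (hJ : Tendsto (fun r => (r ^ 2)⁻¹ * J r) (𝓝[>] 0) (𝓝 0))
    (h : ∀ ε > 0, ∃ C, ∀ᶠ r in 𝓝[>] 0, r ^ 2 * x ≤ C * J r + K * ε * r ^ 2) : x ≤ 0 := by
  have hx : ∀ ε > 0, x ≤ K * ε := fun ε hε => by
    obtain ⟨C, hC⟩ := h ε hε
    refine ge_of_tendsto (by simpa using (hJ.const_mul C).add_const (K * ε)) ?_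
    filter_upwards [hC, self_mem_nhdsWithin] with r hr (hr0 : 0 < r)
    have hr2 : 0 < r ^ 2 := by positivity
    rw [← mul_le_mul_iff_right₀ hr2]
    calc r ^ 2 * x ≤ C * J r + K * ε * r ^ 2 := hr
      _ = r ^ 2 * (C * ((r ^ 2)⁻¹ * J r) + K * ε) := by field_simp
  have hK : Tendsto (fun ε => K * ε) (𝓝[>] 0) (𝓝 0) := by
    simpa using ((continuous_const_mul K).tendsto 0).mono_left nhdsWithin_le_nhds
  exact ge_of_tendsto hK (eventually_nhdsWithin_of_forall hx)

lemma volume_Ioc_prod_Ioc (r : ℝ) (hr : 0 ≤ r) :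
    volume (Ioc (-r) r ×ˢ Ioc (-r) r) = ENNReal.ofReal (4 * r ^ 2) := by
  rw [Measure.volume_eq_prod, Measure.prod_prod, Real.volume_Ioc,
    ← ENNReal.ofReal_mul (by linarith)]
  ring_nf

lemma ball_subset_Ioc_prod_Ioc (r : ℝ) :
    Metric.ball (0 : ℝ × ℝ) r ⊆ Ioc (-r) r ×ˢ Ioc (-r) r := fun p hp => by
  rw [mem_ball_zero_iff, Prod.norm_def, max_lt_iff, Real.norm_eq_abs, Real.norm_eq_abs] at hp
  exact ⟨⟨(abs_lt.1 hp.1).1, (abs_lt.1 hp.1).2.le⟩, ⟨(abs_lt.1 hp.2).1, (abs_lt.1 hp.2).2.le⟩⟩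

variable {E : Type*} [NormedAddCommGroup E]

lemma IsCompact.exists_norm_sub_le_add_mul {F : Type*} [NormedAddCommGroup F] {f : E → F}
    {s : Set E} (hs : IsCompact s) (hf : ContinuousOn f s) {ε : ℝ} (hε : 0 < ε) :
    ∃ C, ∀ a ∈ s, ∀ b ∈ s, ‖f a - f b‖ ≤ ε + C * ‖a - b‖ := by
  obtain ⟨δ, hδ, hfδ⟩ :=
    Metric.uniformContinuousOn_iff.1 (hs.uniformContinuousOn_of_continuous hf) ε hε
  obtain ⟨M, hM⟩ := hs.exists_bound_of_continuousOn hf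
  refine ⟨2 * M / δ, fun a ha b hb => ?_⟩
  have hM0 : 0 ≤ M := (norm_nonneg _).trans (hM a ha)
  rcases lt_or_ge ‖a - b‖ δ with h | h
  · have := hfδ a ha b hb (by rwa [dist_eq_norm])
    rw [dist_eq_norm] at this
    have : 0 ≤ 2 * M / δ * ‖a - b‖ := by positivity
    linarith
  · have : ‖f a - f b‖ ≤ 2 * M / δ * ‖a - b‖ :=
      calc ‖f a - f b‖ ≤ ‖f a‖ + ‖f b‖ := norm_sub_le _ _
        _ ≤ 2 * M / δ * δ := by rw [div_mul_cancel₀ _ hδ.ne']; linarith [hM a ha, hM b hb]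
        _ ≤ 2 * M / δ * ‖a - b‖ := by gcongr
    linarith

lemma MemLp.integrableOn_of_measure_ne_top {α : Type*} [MeasurableSpace α] {μ : Measure α}
    {V : α → E} (hV : MemLp V ∞ μ) {S : Set α} (hS : μ S ≠ ⊤) : IntegrableOn V S μ :=
  have : IsFiniteMeasure (μ.restrict S) := isFiniteMeasure_restrict.2 hS
  (hV.restrict S).integrable le_top

lemma setIntegral_norm_le_of_norm_le_add_mul {α : Type*} [MeasurableSpace α] {μ : Measure α}
    {V F : α → E} (hV : MemLp V ∞ μ) (hF : MemLp F ∞ μ) {S : Set α} (hS : μ S ≠ ⊤) {ε C : ℝ}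
    (h : ∀ x, ‖F x‖ ≤ ε + C * ‖V x‖) :
    ∫ x in S, ‖F x‖ ∂μ ≤ ε * μ.real S + C * ∫ x in S, ‖V x‖ ∂μ := by
  have hε : IntegrableOn (fun _ => ε) S μ := integrableOn_const hS
  have hV' : IntegrableOn (fun x => ‖V x‖) S μ := MemLp.integrableOn_of_measure_ne_top hV.norm hS
  calc ∫ x in S, ‖F x‖ ∂μ ≤ ∫ x in S, (ε + C * ‖V x‖) ∂μ :=
        setIntegral_mono (MemLp.integrableOn_of_measure_ne_top hF.norm hS)
          (hε.add (hV'.const_mul C)) h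
    _ = ε * μ.real S + C * ∫ x in S, ‖V x‖ ∂μ := by
        rw [integral_add hε (hV'.const_mul C), setIntegral_const, integral_const_mul, smul_eq_mul,
          mul_comm ε]

lemma memLp_top_ite {α : Type*} [MeasurableSpace α] {μ : Measure α} {P : α → Prop}
    [DecidablePred P] (hP : MeasurableSet {x | P x}) (a b : E) :
    MemLp (fun x => if P x then a else b) ∞ μ :=
  memLp_top_of_bound
    (stronglyMeasurable_const.ite hP stronglyMeasurable_const).aestronglyMeasurable
    (‖a‖ + ‖b‖) (ae_of_all _ fun _ => by split_ifs <;> simp)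

lemma memLp_top_comp_of_bound [ProperSpace E] {α F : Type*} [MeasurableSpace α]
    [NormedAddCommGroup F] {μ : Measure α} {f : E → F} (hf : Continuous f) {w : α → E}
    (hw : AEStronglyMeasurable w μ) {K : ℝ} (hK : ∀ x, ‖w x‖ ≤ K) :
    MemLp (fun x => f (w x)) ∞ μ := by
  obtain ⟨M, hM⟩ := (isCompact_closedBall (0 : E) K).exists_bound_of_continuousOn hf.continuousOn
  exact memLp_top_of_bound (hf.comp_aestronglyMeasurable hw) M
    (ae_of_all _ fun x => hM _ (mem_closedBall_zero_iff.2 (hK x)))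

def jumpProfile (l : ℝ) (a b : E) (p : ℝ × ℝ) : E := if p.2 < l * p.1 then a else b

lemma memLp_jumpProfile (l : ℝ) (a b : E) : MemLp (jumpProfile l a b) ∞ :=
  memLp_top_ite (measurableSet_lt measurable_snd (measurable_fst.const_mul l)) a b

variable [NormedSpace ℝ E]

lemma setIntegral_Ioc_prod_Ioc {F : ℝ × ℝ → E} {a b c d : ℝ} (hab : a ≤ b) (hcd : c ≤ d)
    (hF : IntegrableOn F (Ioc a b ×ˢ Ioc c d)) :
    ∫ p in Ioc a b ×ˢ Ioc c d, F p = ∫ t in a..b, ∫ x in c..d, F (t, x) := by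
  simp_rw [intervalIntegral.integral_of_le hab, intervalIntegral.integral_of_le hcd]
  rw [Measure.volume_eq_prod] at hF ⊢
  exact setIntegral_prod F hF

def weakForm (φ : ℝ × ℝ → ℝ) (V F : ℝ × ℝ → E) : E :=
  ∫ p, partialFst φ p • V p + partialSnd φ p • F p

def IsWeakSolutionOn (f : E → E) (u : ℝ × ℝ → E) (Ω : Set (ℝ × ℝ)) : Prop :=
  ∀ φ : ℝ × ℝ → ℝ, ContDiff ℝ 1 φ → HasCompactSupport φ → tsupport φ ⊆ Ω →
    weakForm φ u (fun p => f (u p)) = 0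

section WeakForm

variable {φ : ℝ × ℝ → ℝ} {V F : ℝ × ℝ → E}

lemma integrable_weakForm_integrand (hφ : ContDiff ℝ 1 φ) (hφc : HasCompactSupport φ)
    (hV : MemLp V ∞) (hF : MemLp F ∞) :
    Integrable fun p => partialFst φ p • V p + partialSnd φ p • F p := by
  have hφₜ : Integrable (partialFst φ) :=
    hφ.continuous_partialFst.integrable_of_hasCompactSupport hφc.partialFst
  have hφₓ : Integrable (partialSnd φ) :=
    hφ.continuous_partialSnd.integrable_of_hasCompactSupport hφc.partialSnd
  exact (hφₜ.smul_of_top_left hV).add (hφₓ.smul_of_top_left hF)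

lemma weakForm_sub (hφ : ContDiff ℝ 1 φ) (hφc : HasCompactSupport φ) {V' F' : ℝ × ℝ → E}
    (hV : MemLp V ∞) (hF : MemLp F ∞) (hV' : MemLp V' ∞) (hF' : MemLp F' ∞) :
    weakForm φ V F - weakForm φ V' F' = weakForm φ (V - V') (F - F') := by
  rw [weakForm, weakForm, ← integral_sub (integrable_weakForm_integrand hφ hφc hV hF)
    (integrable_weakForm_integrand hφ hφc hV' hF')]
  congr 1 with p
  simp only [Pi.sub_apply, smul_sub]
  abel

lemma norm_weakForm_le (hV : MemLp V ∞) (hF : MemLp F ∞) {S : Set (ℝ × ℝ)}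
    (hSfin : volume S ≠ ⊤) (hφS : tsupport φ ⊆ S) {M₁ M₂ : ℝ}
    (h₁ : ∀ p, |partialFst φ p| ≤ M₁) (h₂ : ∀ p, |partialSnd φ p| ≤ M₂) :
    ‖weakForm φ V F‖ ≤ M₁ * (∫ p in S, ‖V p‖) + M₂ * ∫ p in S, ‖F p‖ := by
  have hVS : IntegrableOn (fun p => ‖V p‖) S := MemLp.integrableOn_of_measure_ne_top hV.norm hSfin
  have hFS : IntegrableOn (fun p => ‖F p‖) S := MemLp.integrableOn_of_measure_ne_top hF.norm hSfin
  have hsupp : ∀ p ∉ S, partialFst φ p • V p + partialSnd φ p • F p = 0 := fun p hp => by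
    rw [partialFst_eq_zero_of_notMem_tsupport (fun h => hp (hφS h)),
      partialSnd_eq_zero_of_notMem_tsupport (fun h => hp (hφS h)), zero_smul, zero_smul, add_zero]
  rw [weakForm, ← setIntegral_eq_integral_of_forall_compl_eq_zero hsupp]
  calc ‖∫ p in S, partialFst φ p • V p + partialSnd φ p • F p‖
      ≤ ∫ p in S, (M₁ * ‖V p‖ + M₂ * ‖F p‖) :=
        norm_integral_le_of_norm_le ((hVS.const_mul _).add (hFS.const_mul _))
          (ae_of_all _ fun p => (norm_add_le _ _).trans (by
            simp only [norm_smul, Real.norm_eq_abs]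
            gcongr <;> simp [h₁, h₂]))
    _ = M₁ * (∫ p in S, ‖V p‖) + M₂ * ∫ p in S, ‖F p‖ := by
        rw [integral_add (hVS.const_mul _) (hFS.const_mul _), integral_const_mul,
          integral_const_mul]

lemma weakForm_comp_sub (φ : ℝ × ℝ → ℝ) (V F : ℝ × ℝ → E) (q : ℝ × ℝ) :
    weakForm (fun p => φ (p - q)) V F = weakForm φ (fun p => V (q + p)) (fun p => F (q + p)) := by
  simp only [weakForm, partialFst_comp_sub, partialSnd_comp_sub]
  rw [← integral_add_left_eq_self _ q]
  simp only [add_sub_cancel_left]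

end WeakForm

lemma IsWeakSolutionOn.comp_add_left {f : E → E} {u : ℝ × ℝ → E} {Ω : Set (ℝ × ℝ)}
    (h : IsWeakSolutionOn f u Ω) (q : ℝ × ℝ) :
    IsWeakSolutionOn f (fun p => u (q + p)) ((q + ·) ⁻¹' Ω) := by
  intro φ hφ hφc hφΩ
  have := h (fun p => φ (p - q)) (hφ.comp (contDiff_id.sub contDiff_const))
    (hφc.comp_homeomorph (Homeomorph.subRight q)) ?_
  · rwa [weakForm_comp_sub] at this
  rw [show (fun p => φ (p - q)) = φ ∘ Homeomorph.subRight q from rfl, tsupport_comp_eq_preimage]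
  intro p hp
  simpa using hφΩ hp

section Profile

variable [CompleteSpace E] {β : ℝ → ℝ}

lemma integral_deriv_smul_ite_lt (hβ : ContDiff ℝ 1 β) (hβc : HasCompactSupport β) (a b : E) :
    ∫ y, deriv β y • (if y < 0 then a else b) = β 0 • (a - b) := by
  have hβ' := integrable_deriv_of_hasCompactSupport hβ hβc
  have hIci : ∫ y in Ici 0, deriv β y = -β 0 := by
    have h := intervalIntegral.integral_Iio_add_Ici (b := 0) hβ'.integrableOn hβ'.integrableOn
    rw [integral_deriv_of_hasCompactSupport hβ hβc,
      integral_Iio_deriv_of_hasCompactSupport hβ hβc] at h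
    linear_combination h
  have hint : Integrable fun y => deriv β y • (if y < 0 then a else b) :=
    hβ'.smul_of_top_left (memLp_top_ite (μ := volume) (measurableSet_Iio (a := (0 : ℝ))) a b)
  rw [← intervalIntegral.integral_Iio_add_Ici (b := 0) hint.integrableOn hint.integrableOn,
    setIntegral_congr_fun measurableSet_Iio fun y (hy : y < 0) => by rw [if_pos hy],
    setIntegral_congr_fun measurableSet_Ici fun y (hy : 0 ≤ y) => by rw [if_neg (not_lt.2 hy)],
    integral_smul_const, integral_smul_const, integral_Iio_deriv_of_hasCompactSupport hβ hβc, hIci,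
    smul_sub, neg_smul, sub_eq_add_neg]

theorem weakForm_mul_comp_sub_jumpProfile {α : ℝ → ℝ} (hα : ContDiff ℝ 1 α)
    (hαc : HasCompactSupport α) (hβ : ContDiff ℝ 1 β) (hβc : HasCompactSupport β)
    (l : ℝ) (a b c d : E) :
    weakForm (fun p => α p.1 * β (p.2 - l * p.1)) (jumpProfile l a b) (jumpProfile l c d) =
      ((∫ t, α t) * β 0) • ((c - l • a) - (d - l • b)) := by
  set G₁ : ℝ → E := fun y => β y • (if y < 0 then a else b)
  set G₂ : ℝ → E := fun y => deriv β y • (if y < 0 then c - l • a else d - l • b)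
  have hG₁ : Integrable G₁ :=
    (hβ.continuous.integrable_of_hasCompactSupport hβc).smul_of_top_left
      (memLp_top_ite measurableSet_Iio a b)
  have hG₂ : Integrable G₂ :=
    (integrable_deriv_of_hasCompactSupport hβ hβc).smul_of_top_left
      (memLp_top_ite measurableSet_Iio _ _)
  -- In the coordinates `(t, y) = (t, x - l t)` the integrand is `α' t • G₁ y + α t • G₂ y`;
  -- then `∫ α' = 0`, and `∫ G₂` only sees the jump of the profile at `y = 0`.
  have hpt : ∀ p : ℝ × ℝ,
      partialFst (fun p => α p.1 * β (p.2 - l * p.1)) p • jumpProfile l a b p +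
        partialSnd (fun p => α p.1 * β (p.2 - l * p.1)) p • jumpProfile l c d p =
      deriv α p.1 • G₁ (p.2 - l * p.1) + α p.1 • G₂ (p.2 - l * p.1) := fun p => by
    rw [partialFst_mul_comp_sub (hα.differentiable one_ne_zero) (hβ.differentiable one_ne_zero),
      partialSnd_mul_comp_sub (hβ.differentiable one_ne_zero)]
    by_cases h : p.2 < l * p.1 <;>
      simp only [jumpProfile, G₁, G₂, h, sub_neg, if_true, if_false] <;> module
  have hint : Integrable fun p : ℝ × ℝ =>
      deriv α p.1 • G₁ (p.2 - l * p.1) + α p.1 • G₂ (p.2 - l * p.1) :=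
    (integrable_weakForm_integrand (by fun_prop) (hasCompactSupport_mul_comp_sub hαc hβc l)
      (memLp_jumpProfile l a b) (memLp_jumpProfile l c d)).congr (ae_of_all _ hpt)
  have hinner : ∀ t : ℝ, ∫ x, (deriv α t • G₁ (x - l * t) + α t • G₂ (x - l * t)) =
      deriv α t • (∫ y, G₁ y) + α t • ∫ y, G₂ y := fun t => by
    have h₁ : Integrable fun x => deriv α t • G₁ (x - l * t) := (hG₁.comp_sub_right _).smul _
    have h₂ : Integrable fun x => α t • G₂ (x - l * t) := (hG₂.comp_sub_right _).smul _
    rw [integral_add h₁ h₂, integral_smul, integral_smul, integral_sub_right_eq_self,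
      integral_sub_right_eq_self]
  have h₁ : Integrable fun t => deriv α t • ∫ y, G₁ y :=
    (integrable_deriv_of_hasCompactSupport hα hαc).smul_const _
  have h₂ : Integrable fun t => α t • ∫ y, G₂ y :=
    (hα.continuous.integrable_of_hasCompactSupport hαc).smul_const _
  rw [weakForm, integral_congr_ae (ae_of_all _ hpt), Measure.volume_eq_prod, integral_prod _ hint]
  simp only [hinner]
  rw [integral_add h₁ h₂, integral_smul_const, integral_smul_const,
    integral_deriv_of_hasCompactSupport hα hαc, integral_deriv_smul_ite_lt hβ hβc, zero_smul,
    zero_add, smul_smul]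

theorem weakForm_rescale_jumpProfile {r : ℝ} {g : ℝ → ℝ} (hg : ContDiff ℝ 1 g)
    (hgc : HasCompactSupport g) (hr : 0 < r) (l : ℝ) (a b c d : E) :
    weakForm (rescale r fun p => g p.1 * g (p.2 - l * p.1)) (jumpProfile l a b)
        (jumpProfile l c d) =
      (r ^ 2 * ((∫ t, g t) * g 0)) • ((c - l • a) - (d - l • b)) := by
  have hgr : ContDiff ℝ 1 fun y => g (r⁻¹ * y) := hg.comp (contDiff_const.mul contDiff_id)
  have hgrc : HasCompactSupport fun y => g (r⁻¹ * y) := by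
    simpa only [smul_eq_mul] using hgc.comp_smul (inv_ne_zero hr.ne')
  rw [rescale_mul_comp_sub, weakForm_mul_comp_sub_jumpProfile (contDiff_const.mul hgr)
    hgrc.mul_left hgr hgrc, integral_const_mul, Measure.integral_comp_mul_left, inv_inv,
    abs_of_pos hr, mul_zero, smul_eq_mul]
  ring_nf

end Profile

section BlowUp

variable {f : E → E} {w : ℝ × ℝ → E} {Ω : Set (ℝ × ℝ)} {l : ℝ} {a b : E}

lemma norm_weakForm_jumpProfile_le (hweak : IsWeakSolutionOn f w Ω) (hw : MemLp w ∞)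
    (hfw : MemLp (fun p => f (w p)) ∞) {ψ : ℝ × ℝ → ℝ} (hψ : ContDiff ℝ 1 ψ)
    (hψc : HasCompactSupport ψ) (hψ₁ : tsupport ψ ⊆ Metric.ball 0 1) {M₁ M₂ : ℝ}
    (h₁ : ∀ p, |partialFst ψ p| ≤ M₁) (h₂ : ∀ p, |partialSnd ψ p| ≤ M₂) {ε C : ℝ}
    (hC : ∀ p, ‖f (w p) - f (jumpProfile l a b p)‖ ≤ ε + C * ‖w p - jumpProfile l a b p‖)
    {r : ℝ} (hr : 0 < r) (hrΩ : Metric.ball 0 r ⊆ Ω) :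
    ‖weakForm (rescale r ψ) (jumpProfile l a b) (jumpProfile l (f a) (f b))‖ ≤
      (M₁ + M₂ * C) * (∫ t in -r..r, ∫ x in -r..r, ‖w (t, x) - jumpProfile l a b (t, x)‖) +
        M₂ * ε * (4 * r ^ 2) := by
  set U := jumpProfile l a b
  set S := Ioc (-r) r ×ˢ Ioc (-r) r
  have hU := memLp_jumpProfile l a b
  have hfU_eq : (fun p => f (U p)) = jumpProfile l (f a) (f b) := funext fun p => apply_ite f _ _ _
  have hfU : MemLp (fun p => f (U p)) ∞ := hfU_eq ▸ memLp_jumpProfile l (f a) (f b)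
  have hS : volume S ≠ ⊤ := by rw [volume_Ioc_prod_Ioc r hr.le]; exact ENNReal.ofReal_ne_top
  have hSr : volume.real S = 4 * r ^ 2 := by
    rw [measureReal_def, volume_Ioc_prod_Ioc r hr.le, ENNReal.toReal_ofReal (by positivity)]
  have hsol : weakForm (rescale r ψ) w (fun p => f (w p)) = 0 := hweak _ hψ.rescale
    (hψc.rescale hr.ne') ((tsupport_rescale_subset_ball hψ₁ hr).trans hrΩ)
  calc ‖weakForm (rescale r ψ) U (jumpProfile l (f a) (f b))‖
      = ‖weakForm (rescale r ψ) (w - U) ((fun p => f (w p)) - fun p => f (U p))‖ := by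
        rw [← weakForm_sub hψ.rescale (hψc.rescale hr.ne') hw hfw hU hfU, hsol, zero_sub,
          norm_neg, hfU_eq]
    _ ≤ M₁ * (∫ p in S, ‖w p - U p‖) + M₂ * ∫ p in S, ‖f (w p) - f (U p)‖ :=
        norm_weakForm_le (hw.sub hU) (hfw.sub hfU) hS
          ((tsupport_rescale_subset_ball hψ₁ hr).trans (ball_subset_Ioc_prod_Ioc r))
          (fun p => partialFst_rescale hr.ne' p ▸ h₁ _)
          (fun p => partialSnd_rescale hr.ne' p ▸ h₂ _)
    _ ≤ M₁ * (∫ p in S, ‖w p - U p‖) + M₂ * (ε * volume.real S + C * ∫ p in S, ‖w p - U p‖) := by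
        have hM₂ : 0 ≤ M₂ := (abs_nonneg _).trans (h₂ 0)
        gcongr
        exact setIntegral_norm_le_of_norm_le_add_mul (hw.sub hU) (hfw.sub hfU) hS hC
    _ = _ := by
        have hdiff : IntegrableOn (fun p => ‖w p - U p‖) S :=
          MemLp.integrableOn_of_measure_ne_top (hw.sub hU).norm hS
        rw [hSr, setIntegral_Ioc_prod_Ioc (by linarith) (by linarith) hdiff]
        ring

theorem rankineHugoniot_of_isWeakSolutionOn [ProperSpace E] (hf : Continuous f)
    (hw : AEStronglyMeasurable w) {K : ℝ} (hwK : ∀ p, ‖w p‖ ≤ K) (hΩ : Ω ∈ 𝓝 0)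
    (hweak : IsWeakSolutionOn f w Ω)
    (hjump : Tendsto (fun r => (r ^ 2)⁻¹ *
        ∫ t in -r..r, ∫ x in -r..r, ‖w (t, x) - jumpProfile l a b (t, x)‖) (𝓝[>] 0) (𝓝 0)) :
    f b - f a = l • (b - a) := by
  obtain ⟨g, hg, hgc, hg0, hG, hψ₁⟩ := exists_bump_tsupport_mul_comp_sub_subset_ball l
  set ψ : ℝ × ℝ → ℝ := fun p => g p.1 * g (p.2 - l * p.1)
  have hψ : ContDiff ℝ 1 ψ := by fun_prop
  have hψc : HasCompactSupport ψ := hasCompactSupport_mul_comp_sub hgc hgc l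
  obtain ⟨M₁, hM₁⟩ := hψ.continuous_partialFst.bounded_above_of_compact_support hψc.partialFst
  obtain ⟨M₂, hM₂⟩ := hψ.continuous_partialSnd.bounded_above_of_compact_support hψc.partialSnd
  obtain ⟨ρ, hρ, hρΩ⟩ := Metric.mem_nhds_iff.1 hΩ
  set v := (f a - l • a) - (f b - l • b)
  have hv_le : ∀ ε > 0, ∃ C, ∀ᶠ r in 𝓝[>] 0, r ^ 2 * ((∫ t, g t) * ‖v‖) ≤
      C * (∫ t in -r..r, ∫ x in -r..r, ‖w (t, x) - jumpProfile l a b (t, x)‖) +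
        4 * M₂ * ε * r ^ 2 := by
    intro ε hε
    set R := max K (‖a‖ + ‖b‖)
    obtain ⟨C, hC⟩ :=
      (isCompact_closedBall (0 : E) R).exists_norm_sub_le_add_mul hf.continuousOn hε
    have hU : ∀ p, ‖jumpProfile l a b p‖ ≤ ‖a‖ + ‖b‖ := fun p => by
      unfold jumpProfile; split_ifs <;> simp
    refine ⟨M₁ + M₂ * C, ?_⟩
    filter_upwards [Ioo_mem_nhdsGT hρ] with r ⟨hr, hrρ⟩
    have := norm_weakForm_jumpProfile_le hweak (memLp_top_of_bound hw K (ae_of_all _ hwK))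
      (memLp_top_comp_of_bound hf hw hwK) hψ hψc hψ₁ (fun p => Real.norm_eq_abs _ ▸ hM₁ p)
      (fun p => Real.norm_eq_abs _ ▸ hM₂ p)
      (fun p => hC _ (mem_closedBall_zero_iff.2 ((hwK p).trans (le_max_left _ _))) _
        (mem_closedBall_zero_iff.2 ((hU p).trans (le_max_right _ _))))
      hr ((Metric.ball_subset_ball hrρ.le).trans hρΩ)
    rw [weakForm_rescale_jumpProfile hg hgc hr, hg0, mul_one, norm_smul,
      Real.norm_of_nonneg (mul_pos (pow_pos hr 2) hG).le] at this
    linarith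
  have hv : v = 0 := norm_le_zero_iff.1 <|
    nonpos_of_mul_nonpos_right (nonpos_of_forall_eventually_sq_mul_le hjump hv_le) hG
  rw [← sub_eq_zero, show f b - f a - l • (b - a) = -v by module, hv, neg_zero]

end BlowUp

end

theorem stmt9_general (n : ℕ) (T : ℝ)
    (f : EuclideanSpace ℝ (Fin n) → EuclideanSpace ℝ (Fin n)) (hf : Continuous f)
    (u : ℝ × ℝ → EuclideanSpace ℝ (Fin n)) (hmeas : Measurable u)
    (K : ℝ) (hbd : ∀ p, ‖u p‖ ≤ K)
    (hweak : ∀ φ : ℝ × ℝ → ℝ, ContDiff ℝ 1 φ → HasCompactSupport φ →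
      tsupport φ ⊆ Ioo 0 T ×ˢ (univ : Set ℝ) →
      ∫ p : ℝ × ℝ, ((deriv (fun s => φ (s, p.2)) p.1) • u p
        + (deriv (fun y => φ (p.1, y)) p.2) • f (u p)) = 0)
    (τ ξ l : ℝ) (hτ : τ ∈ Ioo 0 T)
    (um up : EuclideanSpace ℝ (Fin n))
    (hjump : Tendsto (fun r : ℝ =>
        (r^2)⁻¹ * ∫ t in -r..r, ∫ x in -r..r,
          ‖u (τ + t, ξ + x) - (if x < l * t then um else up)‖)
      (𝓝[>] 0) (𝓝 0)) :
    f up - f um = l • (up - um) := by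
  have hΩ : ((τ, ξ) + ·) ⁻¹' (Ioo 0 T ×ˢ univ) ∈ 𝓝 (0 : ℝ × ℝ) :=
    ((isOpen_Ioo.prod isOpen_univ).preimage (continuous_const_add _)).mem_nhds (by simpa using hτ)
  exact rankineHugoniot_of_isWeakSolutionOn hf
    (hmeas.comp (measurable_const_add _)).aestronglyMeasurable (fun _ => hbd _) hΩ
    (IsWeakSolutionOn.comp_add_left (Ω := Ioo 0 T ×ˢ univ) hweak (τ, ξ)) hjump

/-- At an approximate jump point of a bounded weak solution of u_t + f(u)_x = 0, the
Rankine–Hugoniot condition holds. -/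
theorem stmt9 (n : ℕ) (T : ℝ) (hT : 0 < T)
    (f : EuclideanSpace ℝ (Fin n) → EuclideanSpace ℝ (Fin n)) (hf : Continuous f)
    (u : ℝ × ℝ → EuclideanSpace ℝ (Fin n)) (hmeas : Measurable u)
    (K : ℝ) (hbd : ∀ p, ‖u p‖ ≤ K)
    (hweak : ∀ φ : ℝ × ℝ → ℝ, ContDiff ℝ 1 φ → HasCompactSupport φ →
      tsupport φ ⊆ Ioo 0 T ×ˢ (univ : Set ℝ) →
      ∫ p : ℝ × ℝ, ((deriv (fun s => φ (s, p.2)) p.1) • u p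
        + (deriv (fun y => φ (p.1, y)) p.2) • f (u p)) = 0)
    (τ ξ l : ℝ) (hτ : τ ∈ Ioo 0 T)
    (um up : EuclideanSpace ℝ (Fin n))
    (hjump : Tendsto (fun r : ℝ =>
        (r^2)⁻¹ * ∫ t in -r..r, ∫ x in -r..r,
          ‖u (τ + t, ξ + x) - (if x < l * t then um else up)‖)
      (𝓝[>] 0) (𝓝 0)) :
    f up - f um = l • (up - um) :=
  stmt9_general n T f hf u hmeas K hbd hweak τ ξ l hτ um up hjump
end

section
/- Let u ∈ L¹_loc(ℝ²;ℝⁿ), ε > 0, j ≥ 1, Λ > 0. Say a point (τ,ξ) ∈ ℝ² belongs to J' if there exist states u⁻ ≠ u⁺ with |u⁺ − u⁻| ≥ 1/k, a speed λ with |λ| ≤ Λ/2, such that, with U(t,x) = u⁻ for x < λt and u⁺ for x > λt, one has ∫_{B_r(τ,ξ)} |u(t,x) − U(t−τ, x−ξ)| dx dt ≤ ε r² for all 0 < r < 1/j, where ε = ε(k,Λ) is chosen so that the quantitative shift lower bound ∫_{B₁}|U₁ − U₂((·)+(τ_s,ξ_s))| ≥ 6ε holds for all admissible pairs U₁, U₂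 and all unit shifts (τ_s,ξ_s) with |ξ_s| ≥ Λ|τ_s|. Then any two points (τ₁,ξ₁), (τ₂,ξ₂) ∈ J' with |(τ₁,ξ₁) − (τ₂,ξ₂)| < 1/(2j) satisfy |ξ₂ − ξ₁| ≤ Λ|τ₂ − τ₁|. -/
/-!
Let `r` be the distance between the two points. The jump profiles attached to `q₁` and `q₂`
approximate `u` up to `ε r²` on `disk q₁ r` and up to `ε (2r)²` on `disk q₂ (2r) ⊇ disk q₁ r`, so by
the triangle inequality they are `5 ε r²`-close in `L¹(disk q₁ r)`. Jump profiles are invariant under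
dilations, so rescaling `disk q₁ r` to the unit disk turns this into a `5ε` bound for the unit shift
`(q₁ - q₂) / r`. If that shift lay outside the cone `|ξ| ≤ Λ |τ|`, the lower bound would give `6ε`.
-/

open MeasureTheory Set Filter Topology

/-- The open disk in the (t,x)-plane with center `c` and radius `ρ`. -/
def disk (c : ℝ × ℝ) (ρ : ℝ) : Set (ℝ × ℝ) :=
  {p | (p.1 - c.1)^2 + (p.2 - c.2)^2 < ρ^2}

open Pointwise

lemma disk_subset_closedBall (c : ℝ × ℝ) (ρ : ℝ) : disk c ρ ⊆ Metric.closedBall c |ρ| := by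
  intro p hp
  simp only [disk, mem_ofPred_eq] at hp
  rw [Metric.mem_closedBall, Prod.dist_eq, Real.dist_eq, Real.dist_eq]
  exact max_le (sq_le_sq.1 (by nlinarith [sq_nonneg (p.2 - c.2)]))
    (sq_le_sq.1 (by nlinarith [sq_nonneg (p.1 - c.1)]))

lemma volume_disk_lt_top (c : ℝ × ℝ) (ρ : ℝ) : volume (disk c ρ) < ⊤ :=
  (measure_mono (disk_subset_closedBall c ρ)).trans_lt (isCompact_closedBall c |ρ|).measure_lt_top

lemma MeasureTheory.LocallyIntegrable.integrableOn_disk {E : Type*} [NormedAddCommGroup E]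
    {u : ℝ × ℝ → E}
    (hu : LocallyIntegrable u) (c : ℝ × ℝ) (ρ : ℝ) : IntegrableOn u (disk c ρ) :=
  (hu.integrableOn_isCompact (isCompact_closedBall c |ρ|)).mono_set (disk_subset_closedBall c ρ)

lemma smul_disk_zero_one {r : ℝ} (hr : 0 < r) : r • disk 0 1 = disk 0 r := by
  ext p
  rw [mem_smul_set_iff_inv_smul_mem₀ hr.ne']
  simp only [disk, mem_ofPred_eq, Prod.smul_fst, Prod.smul_snd, smul_eq_mul, Prod.fst_zero,
    Prod.snd_zero, sub_zero, one_pow, mul_pow, inv_pow, ← mul_add,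
    inv_mul_lt_iff₀ (by positivity : (0:ℝ) < r ^ 2), mul_one]

lemma disk_subset_disk_two_mul {q₁ q₂ : ℝ × ℝ} {r : ℝ}
    (hq : (q₁.1 - q₂.1)^2 + (q₁.2 - q₂.2)^2 ≤ r^2) : disk q₁ r ⊆ disk q₂ (2 * r) := by
  intro p hp
  simp only [disk, mem_ofPred_eq] at hp ⊢
  have e₁ : p.1 - q₂.1 = (p.1 - q₁.1) + (q₁.1 - q₂.1) := by ring
  have e₂ : p.2 - q₂.2 = (p.2 - q₁.2) + (q₁.2 - q₂.2) := by ring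
  rw [e₁, e₂]
  nlinarith [sq_nonneg ((p.1 - q₁.1) * (q₁.2 - q₂.2) - (p.2 - q₁.2) * (q₁.1 - q₂.1)),
    sq_nonneg ((p.1 - q₁.1) * (q₁.1 - q₂.1) + (p.2 - q₁.2) * (q₁.2 - q₂.2) - r^2)]

lemma setIntegral_disk_comp_add_smul {F : Type*} [NormedAddCommGroup F] [NormedSpace ℝ F]
    (f : ℝ × ℝ → F) (c : ℝ × ℝ) {r : ℝ} (hr : 0 < r) :
    ∫ p in disk 0 1, f (c + r • p) = (r^2)⁻¹ • ∫ y in disk c r, f y := by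
  have hpre : (c + ·) ⁻¹' disk c r = disk 0 r := by ext; simp [disk]
  rw [Measure.setIntegral_comp_smul_of_pos volume (fun x => f (c + x)) _ hr, smul_disk_zero_one hr,
    ← hpre, (measurePreserving_add_left volume c).setIntegral_preimage_emb
      (measurableEmbedding_addLeft c)]
  simp

section Jump

variable {E : Type*}

/-- `jump um up l (p - q)` is the paper's `U(t - τ, x - ξ)` for `p = (t, x)`, `q = (τ, ξ)`. -/
noncomputable def jump (um up : E) (l : ℝ) (p : ℝ × ℝ) : E := if p.2 < l * p.1 then um else up

variable (um up : E) (l : ℝ)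

lemma jump_smul {r : ℝ} (hr : 0 < r) (p : ℝ × ℝ) : jump um up l (r • p) = jump um up l p := by
  simp only [jump, Prod.smul_fst, Prod.smul_snd, smul_eq_mul, mul_left_comm l r,
    mul_lt_mul_iff_right₀ hr]

lemma integrableOn_jump_comp_sub [NormedAddCommGroup E] (q c : ℝ × ℝ) (ρ : ℝ) :
    IntegrableOn (fun p => jump um up l (p - q)) (disk c ρ) :=
  Measure.integrableOn_of_bounded (M := max ‖um‖ ‖up‖) (volume_disk_lt_top c ρ).ne
    ((stronglyMeasurable_const.ite (measurableSet_lt (by fun_prop) (by fun_prop))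
      stronglyMeasurable_const).aestronglyMeasurable)
    (.of_forall fun p => by unfold jump; split_ifs <;> simp)

end Jump

lemma sq_add_sq_sub_pos_of_cone {Λ : ℝ} {q₁ q₂ : ℝ × ℝ}
    (h : Λ * |q₂.1 - q₁.1| < |q₂.2 - q₁.2|) : 0 < (q₁.1 - q₂.1)^2 + (q₁.2 - q₂.2)^2 := by
  by_contra! hle
  have h₁ : q₂.1 - q₁.1 = 0 := by nlinarith [sq_nonneg (q₁.1 - q₂.1), sq_nonneg (q₁.2 - q₂.2)]
  have h₂ : q₂.2 - q₁.2 = 0 := by nlinarith [sq_nonneg (q₁.1 - q₂.1), sq_nonneg (q₁.2 - q₂.2)]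
  simp [h₁, h₂] at h

lemma sq_add_sq_inv_smul {a : ℝ × ℝ} {r : ℝ} (hr : r ≠ 0) (h : a.1^2 + a.2^2 = r^2) :
    (r⁻¹ • a).1^2 + (r⁻¹ • a).2^2 = 1 := by
  simp only [Prod.smul_fst, Prod.smul_snd, smul_eq_mul, mul_pow, ← mul_add, h]
  field_simp

lemma cone_smul {Λ c : ℝ} {a : ℝ × ℝ} (hc : 0 ≤ c) (h : Λ * |a.1| ≤ |a.2|) :
    Λ * |(c • a).1| ≤ |(c • a).2| := by
  simp only [Prod.smul_fst, Prod.smul_snd, smul_eq_mul, abs_mul, abs_of_nonneg hc, mul_left_comm Λ]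
  exact mul_le_mul_of_nonneg_left h hc

lemma integral_disk_norm_sub_le_of_approx {E : Type*} [NormedAddCommGroup E]
    {u V₁ V₂ : ℝ × ℝ → E} {q₁ q₂ : ℝ × ℝ} {r δ : ℝ}
    (hq : (q₁.1 - q₂.1)^2 + (q₁.2 - q₂.2)^2 ≤ r^2)
    (hV₁ : IntegrableOn (fun p => u p - V₁ p) (disk q₁ r))
    (hV₂ : IntegrableOn (fun p => u p - V₂ p) (disk q₂ (2 * r)))
    (h₁ : ∫ p in disk q₁ r, ‖u p - V₁ p‖ ≤ δ * r^2)
    (h₂ : ∫ p in disk q₂ (2 * r), ‖u p - V₂ p‖ ≤ δ * (2 * r)^2) :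
    ∫ p in disk q₁ r, ‖V₁ p - V₂ p‖ ≤ 5 * δ * r^2 := by
  have hsub := disk_subset_disk_two_mul hq
  calc ∫ p in disk q₁ r, ‖V₁ p - V₂ p‖
      ≤ ∫ p in disk q₁ r, (‖u p - V₁ p‖ + ‖u p - V₂ p‖) :=
        integral_mono_of_nonneg (.of_forall fun _ => norm_nonneg _)
          (hV₁.norm.add (hV₂.mono_set hsub).norm) (.of_forall fun p => by
            simpa only [norm_sub_rev (u p)] using
              norm_sub_le_norm_sub_add_norm_sub (V₁ p) (u p) (V₂ p))
    _ = (∫ p in disk q₁ r, ‖u p - V₁ p‖) + ∫ p in disk q₁ r, ‖u p - V₂ p‖ :=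
        integral_add hV₁.norm (hV₂.mono_set hsub).norm
    _ ≤ (∫ p in disk q₁ r, ‖u p - V₁ p‖) + ∫ p in disk q₂ (2 * r), ‖u p - V₂ p‖ :=
        add_le_add le_rfl <|
          setIntegral_mono_set hV₂.norm (.of_forall fun _ => norm_nonneg _) hsub.eventuallyLE
    _ ≤ 5 * δ * r^2 := by linarith

lemma integral_disk_norm_jump_sub_jump_shift {E : Type*} [NormedAddCommGroup E]
    (um₁ up₁ um₂ up₂ : E) (l₁ l₂ : ℝ) (q₁ q₂ : ℝ × ℝ) {r : ℝ} (hr : 0 < r) :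
    ∫ p in disk 0 1, ‖jump um₁ up₁ l₁ p - jump um₂ up₂ l₂ (p + r⁻¹ • (q₁ - q₂))‖ =
      (r^2)⁻¹ * ∫ y in disk q₁ r, ‖jump um₁ up₁ l₁ (y - q₁) - jump um₂ up₂ l₂ (y - q₂)‖ := by
  rw [← smul_eq_mul, ← setIntegral_disk_comp_add_smul _ q₁ hr]
  congr with p
  have hshift : q₁ + r • p - q₂ = r • (p + r⁻¹ • (q₁ - q₂)) := by
    rw [smul_add, smul_inv_smul₀ hr.ne']; abel
  rw [add_sub_cancel_left, hshift, jump_smul _ _ _ hr, jump_smul _ _ _ hr]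

theorem stmt16_general (n : ℕ) (Λ ε : ℝ) (hε : 0 < ε)
    (k j : ℕ)
    (u : ℝ × ℝ → EuclideanSpace ℝ (Fin n))
    (hu : LocallyIntegrable u volume)
    (hlower : ∀ (um₁ up₁ um₂ up₂ : EuclideanSpace ℝ (Fin n)) (l₁ l₂ : ℝ),
      (1:ℝ)/k ≤ ‖up₁ - um₁‖ → (1:ℝ)/k ≤ ‖up₂ - um₂‖ →
      |l₁| ≤ Λ/2 → |l₂| ≤ Λ/2 →
      ∀ τs ξs : ℝ, τs^2 + ξs^2 = 1 → Λ * |τs| ≤ |ξs| →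
        6 * ε ≤ ∫ p in disk (0, 0) 1,
          ‖(if p.2 < l₁ * p.1 then um₁ else up₁)
            - (if p.2 + ξs < l₂ * (p.1 + τs) then um₂ else up₂)‖)
    (J' : Set (ℝ × ℝ))
    (hJ' : ∀ q ∈ J', ∃ (um up : EuclideanSpace ℝ (Fin n)) (l : ℝ),
      um ≠ up ∧ (1:ℝ)/k ≤ ‖up - um‖ ∧ |l| ≤ Λ/2 ∧
      ∀ r : ℝ, 0 < r → r < 1/j →
        ∫ p in disk q r,
          ‖u p - (if p.2 - q.2 < l * (p.1 - q.1) then um else up)‖ ≤ ε * r^2) :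
    ∀ q₁ ∈ J', ∀ q₂ ∈ J',
      Real.sqrt ((q₁.1 - q₂.1)^2 + (q₁.2 - q₂.2)^2) < 1/(2*j) →
      |q₂.2 - q₁.2| ≤ Λ * |q₂.1 - q₁.1| := by
  intro q₁ hq₁ q₂ hq₂ hdist
  by_contra! hcone
  set r := Real.sqrt ((q₁.1 - q₂.1)^2 + (q₁.2 - q₂.2)^2)
  have hr2 : r^2 = (q₁.1 - q₂.1)^2 + (q₁.2 - q₂.2)^2 := Real.sq_sqrt (by positivity)
  have hr : 0 < r := Real.sqrt_pos.2 (sq_add_sq_sub_pos_of_cone hcone)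
  have h2r : 2 * r < 1 / j := by linarith [show 2 * (1 / (2 * (j : ℝ))) = 1 / j by ring]
  have hshift_cone : Λ * |(q₁ - q₂).1| ≤ |(q₁ - q₂).2| := by
    rw [Prod.fst_sub, Prod.snd_sub, abs_sub_comm q₁.1, abs_sub_comm q₁.2]
    exact hcone.le
  obtain ⟨um₁, up₁, l₁, -, hk₁, hl₁, happrox₁⟩ := hJ' q₁ hq₁
  obtain ⟨um₂, up₂, l₂, -, hk₂, hl₂, happrox₂⟩ := hJ' q₂ hq₂
  have hlower' : 6 * ε ≤ ∫ p in disk 0 1,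
      ‖jump um₁ up₁ l₁ p - jump um₂ up₂ l₂ (p + r⁻¹ • (q₁ - q₂))‖ :=
    hlower um₁ up₁ um₂ up₂ l₁ l₂ hk₁ hk₂ hl₁ hl₂ _ _ (sq_add_sq_inv_smul hr.ne' hr2.symm)
      (cone_smul (inv_nonneg.2 hr.le) hshift_cone)
  have hupper : ∫ y in disk q₁ r, ‖jump um₁ up₁ l₁ (y - q₁) - jump um₂ up₂ l₂ (y - q₂)‖
      ≤ 5 * ε * r^2 := integral_disk_norm_sub_le_of_approx hr2.ge
    ((hu.integrableOn_disk _ _).sub (integrableOn_jump_comp_sub um₁ up₁ l₁ q₁ _ _))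
    ((hu.integrableOn_disk _ _).sub (integrableOn_jump_comp_sub um₂ up₂ l₂ q₂ _ _))
    (happrox₁ r hr (by linarith)) (happrox₂ (2 * r) (by linarith) h2r)
  rw [integral_disk_norm_jump_sub_jump_shift _ _ _ _ _ _ _ _ hr] at hlower'
  have hcontra : 6 * ε ≤ 5 * ε := calc
    6 * ε ≤ _ := hlower'
    _ ≤ (r^2)⁻¹ * (5 * ε * r^2) := by gcongr
    _ = 5 * ε := by field_simp
  linarith

/-- Nearby points of the set J' of uniform approximate jumps satisfy the Lipschitz
cone condition. -/
theorem stmt16 (n : ℕ) (Λ ε : ℝ) (hΛ : 0 < Λ) (hε : 0 < ε)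
    (k j : ℕ) (hk : 1 ≤ k) (hj : 1 ≤ j)
    (u : ℝ × ℝ → EuclideanSpace ℝ (Fin n))
    (hu : LocallyIntegrable u volume)
    (hlower : ∀ (um₁ up₁ um₂ up₂ : EuclideanSpace ℝ (Fin n)) (l₁ l₂ : ℝ),
      (1:ℝ)/k ≤ ‖up₁ - um₁‖ → (1:ℝ)/k ≤ ‖up₂ - um₂‖ →
      |l₁| ≤ Λ/2 → |l₂| ≤ Λ/2 →
      ∀ τs ξs : ℝ, τs^2 + ξs^2 = 1 → Λ * |τs| ≤ |ξs| →
        6 * ε ≤ ∫ p in disk (0, 0) 1,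
          ‖(if p.2 < l₁ * p.1 then um₁ else up₁)
            - (if p.2 + ξs < l₂ * (p.1 + τs) then um₂ else up₂)‖)
    (J' : Set (ℝ × ℝ))
    (hJ' : ∀ q ∈ J', ∃ (um up : EuclideanSpace ℝ (Fin n)) (l : ℝ),
      um ≠ up ∧ (1:ℝ)/k ≤ ‖up - um‖ ∧ |l| ≤ Λ/2 ∧
      ∀ r : ℝ, 0 < r → r < 1/j →
        ∫ p in disk q r,
          ‖u p - (if p.2 - q.2 < l * (p.1 - q.1) then um else up)‖ ≤ ε * r^2) :
    ∀ q₁ ∈ J', ∀ q₂ ∈ J',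
      Real.sqrt ((q₁.1 - q₂.1)^2 + (q₁.2 - q₂.2)^2) < 1/(2*j) →
      |q₂.2 - q₁.2| ≤ Λ * |q₂.1 - q₁.1| :=
  stmt16_general n Λ ε hε k j u hu hlower J' hJ'
end
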